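/- arXiv:1702.03446 — 7 statements merged into one kernel-verified Lean document; each statement's English description precedes it below -/
import Mathlib

section
/- Let D ∈ ℝ^{n×m} be a full-rank matrix with n ≤ m, and let N be a positive integer. For i = 1,…,N let R_i ∈ ℝ^{n×N} be the cyclic patch-extraction operator (extracting n consecutive coordinates starting at position i, indices mod N), let D_G ∈ ℝ^{N×mN} be the horizontal concatenation of the matrices (1/n)·R_iᵀD, and let M ∈ ℝ^{nN×mN} be the block matrix whose i-th block row is Q_i − R_i D_G, where Q_i places D in the i-th block position and zeros elsewhere. Then dim ker M = N(m − n + 1). -/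
open Matrix

noncomputable section

/-- Cyclic patch-extraction operator: extracts the `n` consecutive coordinates of a signal of
length `N` starting at position `i`, indices taken modulo `N`. -/
def Rop (N n : ℕ) (i : Fin N) : Matrix (Fin n) (Fin N) ℝ :=
  Matrix.of fun k j => if (j : ℕ) = ((i : ℕ) + (k : ℕ)) % N then 1 else 0

/-- Global convolutional dictionary: horizontal concatenation of the blocks `(1/n) • Rᵢᵀ D`. -/
def DG (N n m : ℕ) (D : Matrix (Fin n) (Fin m) ℝ) : Matrix (Fin N) (Fin N × Fin m) ℝ :=
  Matrix.of fun x p => ((1 / (n : ℝ)) • ((Rop N n p.1)ᵀ * D)) x p.2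

/-- `Qᵢ` places `D` in block position `i` and zeros elsewhere. -/
def Qop (N n m : ℕ) (D : Matrix (Fin n) (Fin m) ℝ) (i : Fin N) :
    Matrix (Fin n) (Fin N × Fin m) ℝ :=
  Matrix.of fun k p => if p.1 = i then D k p.2 else 0

/-- Patch-agreement constraint matrix `M`: block rows `Qᵢ - Rᵢ D_G`. -/
def Mop (N n m : ℕ) (D : Matrix (Fin n) (Fin m) ℝ) :
    Matrix (Fin N × Fin n) (Fin N × Fin m) ℝ :=
  Matrix.of fun q p => (Qop N n m D q.1 - Rop N n q.1 * DG N n m D) q.2 p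

/-- Bottom extraction operator `S_B = [0  I_{n-1}]`. -/
def SBop (n : ℕ) : Matrix (Fin (n - 1)) (Fin n) ℝ :=
  Matrix.of fun r j => if (j : ℕ) = (r : ℕ) + 1 then 1 else 0

/-- Top extraction operator `S_T = [I_{n-1}  0]`. -/
def STop (n : ℕ) : Matrix (Fin (n - 1)) (Fin n) ℝ :=
  Matrix.of fun r j => if (j : ℕ) = (r : ℕ) then 1 else 0

/-- `ℓ₀` pseudo-norm: the number of nonzero entries. -/
def l0 {m : ℕ} (α : Fin m → ℝ) : ℕ := (Function.support α).ncard

/-- The support of a vector, as a `Finset`. -/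
def suppF {m : ℕ} (α : Fin m → ℝ) : Finset (Fin m) :=
  (Set.toFinite (Function.support α)).toFinset

/-- The spark of a dictionary: the minimal number of linearly dependent columns (`⊤` if the
columns are linearly independent). -/
def spark {n m : ℕ} (D : Matrix (Fin n) (Fin m) ℝ) : ℕ∞ :=
  sInf {j : ℕ∞ | ∃ s : Finset (Fin m), (s.card : ℕ∞) = j ∧
    (D.submatrix id (fun a : {a // a ∈ s} => (a : Fin m))).rank < s.card}

/-- The globalized spark relative to a family `T` of allowed supports. -/
def gspark {n m : ℕ} (D : Matrix (Fin n) (Fin m) ℝ) (T : Set (Finset (Fin m))) : ℕ∞ :=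
  sInf {j : ℕ∞ | ∃ s₁ ∈ T, ∃ s₂ ∈ T, (((s₁ ∪ s₂).card : ℕ) : ℕ∞) = j ∧
    (D.submatrix id (fun a : {a // a ∈ s₁ ∪ s₂} => (a : Fin m))).rank < (s₁ ∪ s₂).card}
lemma Rop_mulVec {N n : ℕ} (hN : 0 < N) (i : Fin N) (x : Fin N → ℝ) (k : Fin n) :
    (Rop N n i).mulVec x k = x ⟨((i : ℕ) + k) % N, Nat.mod_lt _ hN⟩ := by
  unfold Rop Matrix.mulVec dotProduct
  simp only [Matrix.of_apply]
  rw [Finset.sum_eq_single (⟨((i : ℕ) + k) % N, Nat.mod_lt _ hN⟩ : Fin N)]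
  · simp
  · intro b _ hb
    rw [if_neg, zero_mul]
    intro h; apply hb; exact Fin.ext h
  · simp

lemma sum_RopT_Rop {N n : ℕ} (hN : 0 < N) (hnN : n ≤ N) (x : Fin N → ℝ) :
    ∑ i : Fin N, (Rop N n i)ᵀ.mulVec ((Rop N n i).mulVec x) = (n : ℝ) • x := by
  funext j
  simp only [Finset.sum_apply, Pi.smul_apply, smul_eq_mul]
  have key : ∀ i : Fin N, (Rop N n i)ᵀ.mulVec ((Rop N n i).mulVec x) j
      = ∑ k : Fin n, if (j : ℕ) = ((i : ℕ) + k) % N then x j else 0 := by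
    intro i
    have h0 : (Rop N n i)ᵀ.mulVec ((Rop N n i).mulVec x) j
        = ∑ k : Fin n, Rop N n i k j * ((Rop N n i).mulVec x) k := rfl
    rw [h0]
    refine Finset.sum_congr rfl fun k _ => ?_
    rw [Rop_mulVec hN]
    show (if (j:ℕ) = ((i:ℕ) + k) % N then (1:ℝ) else 0) * _ = _
    by_cases h : (j : ℕ) = ((i : ℕ) + k) % N
    · rw [if_pos h, if_pos h, one_mul]
      congr 1
      exact Fin.ext h.symm
    · rw [if_neg h, if_neg h, zero_mul]
  simp only [key]
  rw [Finset.sum_comm]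
  have : ∀ k : Fin n, ∑ i : Fin N, (if (j : ℕ) = ((i : ℕ) + k) % N then x j else 0) = x j := by
    intro k
    have hk : (k : ℕ) ≤ N := le_of_lt (lt_of_lt_of_le k.2 hnN)
    rw [Finset.sum_eq_single (⟨((j : ℕ) + (N - k)) % N, Nat.mod_lt _ hN⟩ : Fin N)]
    · rw [if_pos]
      have h1 : ((((j:ℕ) + (N - k)) % N) + k) % N = ((j:ℕ) + (N - k) + k) % N :=
        Nat.mod_add_mod _ _ _
      have h2 : (j:ℕ) + (N - k) + k = j + N := by omega
      rw [h1, h2, Nat.add_mod_right, Nat.mod_eq_of_lt j.2]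
    · intro b _ hb
      rw [if_neg]
      intro h
      apply hb
      apply Fin.ext
      show (b : ℕ) = _
      have h1 : (((j:ℕ) + (N - k)) % N) = (((b:ℕ) + k) % N + (N - k)) % N := by rw [← h]
      rw [Nat.mod_add_mod] at h1
      have h2 : (b:ℕ) + k + (N - k) = b + N := by omega
      rw [h2, Nat.add_mod_right, Nat.mod_eq_of_lt b.2] at h1
      exact h1.symm
    · simp
  simp only [this, Finset.sum_const, Finset.card_univ, Fintype.card_fin, nsmul_eq_mul]

lemma DG_mulVec (N n m : ℕ) (D : Matrix (Fin n) (Fin m) ℝ) (α : Fin N × Fin m → ℝ) :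
    (DG N n m D).mulVec α =
      (1 / (n : ℝ)) • ∑ i : Fin N, (Rop N n i)ᵀ.mulVec (D.mulVec (fun j => α (i, j))) := by
  funext x
  simp only [Pi.smul_apply, Finset.sum_apply, smul_eq_mul]
  rw [Finset.mul_sum]
  show ∑ p : Fin N × Fin m, DG N n m D x p * α p = _
  unfold DG
  rw [Fintype.sum_prod_type]
  refine Finset.sum_congr rfl fun i _ => ?_
  have hR : (1 / (n:ℝ)) * ((Rop N n i)ᵀ.mulVec (D.mulVec fun j => α (i,j))) x
      = ∑ k : Fin n, ∑ j : Fin m, (1/(n:ℝ)) * ((Rop N n i)ᵀ x k * (D k j * α (i,j))) := by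
    rw [show ((Rop N n i)ᵀ.mulVec (D.mulVec fun j => α (i,j))) x
        = ∑ k : Fin n, (Rop N n i)ᵀ x k * (D.mulVec fun j => α (i,j)) k from rfl]
    rw [Finset.mul_sum]
    refine Finset.sum_congr rfl fun k _ => ?_
    rw [show (D.mulVec fun j => α (i,j)) k = ∑ j : Fin m, D k j * α (i,j) from rfl]
    rw [Finset.mul_sum, Finset.mul_sum]
  rw [hR, Finset.sum_comm]
  refine Finset.sum_congr rfl fun j _ => ?_
  simp only [Matrix.of_apply, Matrix.smul_apply, Pi.smul_apply, smul_eq_mul,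
    Matrix.mul_apply, Matrix.transpose_apply]
  rw [Finset.mul_sum, Finset.sum_mul]
  refine Finset.sum_congr rfl fun k _ => ?_
  ring

lemma Mop_mulVec (N n m : ℕ) (D : Matrix (Fin n) (Fin m) ℝ) (α : Fin N × Fin m → ℝ)
    (q : Fin N × Fin n) :
    (Mop N n m D).mulVec α q =
      D.mulVec (fun j => α (q.1, j)) q.2
        - (Rop N n q.1).mulVec ((DG N n m D).mulVec α) q.2 := by
  have h1 : (Mop N n m D).mulVec α q
      = (Qop N n m D q.1).mulVec α q.2 - (Rop N n q.1 * DG N n m D).mulVec α q.2 := by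
    unfold Mop Matrix.mulVec dotProduct
    simp only [Matrix.of_apply, Matrix.sub_apply, sub_mul, Finset.sum_sub_distrib]
  rw [h1, ← Matrix.mulVec_mulVec]
  congr 1
  unfold Qop Matrix.mulVec dotProduct
  simp only [Matrix.of_apply]
  rw [Fintype.sum_prod_type]
  rw [Finset.sum_eq_single q.1]
  · simp
  · intro b _ hb
    simp only [if_neg hb, zero_mul, Finset.sum_const_zero]
  · simp

/-- The parametrization of the kernel of `M`. -/
def Fmap (N n m : ℕ) (D : Matrix (Fin n) (Fin m) ℝ)
    (g : (Fin n → ℝ) →ₗ[ℝ] (Fin m → ℝ)) :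
    ((Fin N → ℝ) × (Fin N → LinearMap.ker D.mulVecLin)) →ₗ[ℝ] (Fin N × Fin m → ℝ) where
  toFun xb := fun p => g ((Rop N n p.1).mulVec xb.1) p.2 + (xb.2 p.1 : Fin m → ℝ) p.2
  map_add' a b := by
    funext p
    simp [Matrix.mulVec_add, map_add]
    ring
  map_smul' c a := by
    funext p
    simp [Matrix.mulVec_smul, _root_.map_smul]
    ring

lemma Fmap_block {N n m : ℕ} {D : Matrix (Fin n) (Fin m) ℝ}
    {g : (Fin n → ℝ) →ₗ[ℝ] (Fin m → ℝ)} (hg : D.mulVecLin.comp g = LinearMap.id)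
    (xb : (Fin N → ℝ) × (Fin N → LinearMap.ker D.mulVecLin)) (i : Fin N) :
    D.mulVec (fun j => Fmap N n m D g xb (i, j)) = (Rop N n i).mulVec xb.1 := by
  have h0 : (fun j => Fmap N n m D g xb (i, j))
      = g ((Rop N n i).mulVec xb.1) + (xb.2 i : Fin m → ℝ) := rfl
  have h1 : D.mulVec (fun j => Fmap N n m D g xb (i, j))
      = D.mulVecLin (g ((Rop N n i).mulVec xb.1) + (xb.2 i : Fin m → ℝ)) := by
    rw [h0]; rfl
  rw [h1, map_add]
  have h2 : D.mulVecLin (g ((Rop N n i).mulVec xb.1)) = (Rop N n i).mulVec xb.1 :=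
    DFunLike.congr_fun hg _
  have h3 : D.mulVecLin (xb.2 i : Fin m → ℝ) = 0 := (xb.2 i).2
  rw [h2, h3, add_zero]


/-- For a full-rank dictionary `D`, `dim ker M = N (m - n + 1)`. -/
theorem dim_ker_M (n m N : ℕ) (hN : 0 < N) (hn : 0 < n) (hnm : n ≤ m) (hnN : n ≤ N)
    (D : Matrix (Fin n) (Fin m) ℝ) (hD : D.rank = n) :
    Module.finrank ℝ (LinearMap.ker (Mop N n m D).mulVecLin) = N * (m - n + 1) := by
  have hn' : (n : ℝ) ≠ 0 := Nat.cast_ne_zero.mpr hn.ne'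
  -- surjectivity of D
  have hrange : LinearMap.range D.mulVecLin = ⊤ := by
    apply Submodule.eq_top_of_finrank_eq
    rw [← Matrix.rank, hD, Module.finrank_fintype_fun_eq_card, Fintype.card_fin]
  obtain ⟨g, hg⟩ := D.mulVecLin.exists_rightInverse_of_surjective hrange
  -- DG of Fmap
  have hDGF : ∀ xb, (DG N n m D).mulVec (Fmap N n m D g xb) = xb.1 := by
    intro xb
    rw [DG_mulVec]
    have : ∀ i : Fin N, (Rop N n i)ᵀ.mulVec (D.mulVec (fun j => Fmap N n m D g xb (i, j)))
        = (Rop N n i)ᵀ.mulVec ((Rop N n i).mulVec xb.1) := by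
      intro i; rw [Fmap_block hg]
    simp only [this]
    rw [sum_RopT_Rop hN hnN, smul_smul, one_div, inv_mul_cancel₀ hn', one_smul]
  -- range of Fmap is the kernel of M
  have hrangeF : LinearMap.range (Fmap N n m D g) = LinearMap.ker (Mop N n m D).mulVecLin := by
    ext α
    constructor
    · rintro ⟨xb, rfl⟩
      rw [LinearMap.mem_ker]
      funext q
      rw [Matrix.mulVecLin_apply, Mop_mulVec, hDGF, Fmap_block hg]
      simp
    · intro hα
      have hker : ∀ i : Fin N, D.mulVec (fun j => α (i, j))
          = (Rop N n i).mulVec ((DG N n m D).mulVec α) := by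
        intro i
        funext k
        have h0 : (Mop N n m D).mulVec α (i, k) = 0 := by
          rw [← Matrix.mulVecLin_apply, LinearMap.mem_ker.mp hα]; rfl
        rw [Mop_mulVec] at h0
        have := sub_eq_zero.mp h0
        exact this
      set x := (DG N n m D).mulVec α with hx
      refine ⟨(x, fun i => ⟨(fun j => α (i, j)) - g ((Rop N n i).mulVec x), ?_⟩), ?_⟩
      · rw [LinearMap.mem_ker, map_sub]
        have h1 : D.mulVecLin (fun j => α (i, j)) = (Rop N n i).mulVec x := hker i
        have h2 : D.mulVecLin (g ((Rop N n i).mulVec x)) = (Rop N n i).mulVec x :=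
          DFunLike.congr_fun hg _
        rw [h1, h2, sub_self]
      · funext p
        show g ((Rop N n p.1).mulVec x) p.2 + ((fun j => α (p.1, j)) - g ((Rop N n p.1).mulVec x)) p.2 = α p
        simp
  -- injectivity of Fmap
  have hinj : Function.Injective (Fmap N n m D g) := by
    rw [← LinearMap.ker_eq_bot]
    rw [LinearMap.ker_eq_bot']
    rintro ⟨x, β⟩ h0
    have hblock : ∀ i : Fin N, (Rop N n i).mulVec x = 0 := by
      intro i
      rw [← Fmap_block hg (x, β) i]
      have : (fun j => Fmap N n m D g (x, β) (i, j)) = 0 := by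
        funext j; rw [h0]; rfl
      rw [this]
      exact Matrix.mulVec_zero _
    have hx0 : x = 0 := by
      have h1 : ∑ i : Fin N, (Rop N n i)ᵀ.mulVec ((Rop N n i).mulVec x) = 0 := by
        refine Finset.sum_eq_zero fun i _ => ?_
        rw [hblock i]
        exact Matrix.mulVec_zero _
      rw [sum_RopT_Rop hN hnN] at h1
      have := smul_eq_zero.mp h1
      rcases this with h | h
      · exact absurd h hn'
      · exact h
    have hβ0 : β = 0 := by
      funext i
      apply Subtype.ext
      have : (β i : Fin m → ℝ) = fun j => Fmap N n m D g (x, β) (i, j)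
          - g ((Rop N n i).mulVec x) j := by
        funext j
        show (β i : Fin m → ℝ) j = _
        simp [Fmap]
      rw [this]
      funext j
      rw [h0, hblock i]
      simp
    rw [hx0, hβ0]
    rfl
  -- finrank computation
  have e1 := LinearEquiv.ofInjective (Fmap N n m D g) hinj
  rw [← hrangeF]
  rw [← LinearEquiv.finrank_eq e1]
  have hkerd : Module.finrank ℝ (LinearMap.ker D.mulVecLin) = m - n := by
    have h1 := D.mulVecLin.finrank_range_add_finrank_ker
    rw [← Matrix.rank, hD, Module.finrank_fintype_fun_eq_card, Fintype.card_fin] at h1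
    omega
  rw [Module.finrank_prod, Module.finrank_fintype_fun_eq_card, Fintype.card_fin,
    Module.finrank_pi_fintype, Finset.sum_const, Finset.card_univ, Fintype.card_fin,
    smul_eq_mul, hkerd]
  have : m - n + 1 = (m - n) + 1 := rfl
  rw [Nat.mul_add, Nat.mul_one]
  omega

end
end

section
/- Let D ∈ ℝ^{n×m} have unit-norm columns d_j, let 𝒯 be a family of subsets of {1,…,m}, and define the globalized coherence function μ₁*(s) = max over S ∈ 𝒯∪𝒯 with |S| = s of max_{j∈S} Σ_{k∈S∖{j}} |⟨d_j, d_k⟩|, where 𝒯∪𝒯 = { s₁∪s₂ : s₁, s₂ ∈ 𝒯 }. Then the globalized spark satisfies σ*(D) ≥ min{ s : μ₁*(s) ≥ 1 }. -/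
open Matrix

noncomputable section

/-- Globalized spark bounded below via the globalized coherence: `σ*(D) ≥ min{s : μ₁*(s) ≥ 1}`.
Here `μ₁*(s) ≥ 1` is expressed by the existence of `S = s₁ ∪ s₂` with `|S| = s` and some
`j ∈ S` whose coherence sum over `S \ {j}` is at least `1`. -/
theorem gspark_ge_coherence (n m : ℕ) (D : Matrix (Fin n) (Fin m) ℝ)
    (T : Set (Finset (Fin m)))
    (hunit : ∀ j, ∑ i, D i j ^ 2 = 1) :
    sInf {s : ℕ∞ | ∃ s₁ ∈ T, ∃ s₂ ∈ T, (((s₁ ∪ s₂).card : ℕ) : ℕ∞) = s ∧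
        ∃ j ∈ s₁ ∪ s₂, 1 ≤ ∑ k ∈ (s₁ ∪ s₂).erase j, |∑ i, D i j * D i k|} ≤
      gspark D T := by
  unfold gspark
  apply sInf_le_sInf
  rintro s ⟨s₁, h₁, s₂, h₂, hcard, hrank⟩
  refine ⟨s₁, h₁, s₂, h₂, hcard, ?_⟩
  by_contra hc
  push_neg at hc
  set S := s₁ ∪ s₂ with hS
  set A := D.submatrix id (fun a : {a // a ∈ S} => (a : Fin m)) with hA
  have hG : ∀ j k : {a // a ∈ S}, (Aᵀ * A) j k = ∑ i, D i j * D i k := by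
    intro j k
    simp [Matrix.mul_apply, hA, Matrix.submatrix_apply]
  have hdet : (Aᵀ * A).det ≠ 0 := by
    apply det_ne_zero_of_sum_row_lt_diag
    intro k
    have hdiag : (Aᵀ * A) k k = 1 := by
      rw [hG]; simpa [sq] using hunit (k : Fin m)
    have hsum : ∑ j ∈ Finset.univ.erase k, ‖(Aᵀ * A) k j‖ =
        ∑ j ∈ S.erase (k : Fin m), |∑ i, D i (k : Fin m) * D i j| := by
      refine Finset.sum_bij (fun k' _ => (k' : Fin m)) ?_ ?_ ?_ ?_
      · rintro ⟨a, ha⟩ ha'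
        simp only [Finset.mem_erase, Finset.mem_univ, and_true, ne_eq] at ha' ⊢
        exact ⟨fun h => ha' (Subtype.ext h), ha⟩
      · rintro ⟨a, ha⟩ _ ⟨b, hb⟩ _ h
        exact Subtype.ext h
      · intro b hb
        simp only [Finset.mem_erase] at hb
        exact ⟨⟨b, hb.2⟩, by simp [Subtype.ext_iff, hb.1], rfl⟩
      · intro a _
        rw [hG]; simp [Real.norm_eq_abs]
    rw [hdiag, hsum]
    rw [norm_one]
    exact hc (k : Fin m) k.2
  have hrk : A.rank = Fintype.card {a // a ∈ S} := by
    have h := Matrix.rank_of_isUnit (Aᵀ * A)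
      ((Matrix.isUnit_iff_isUnit_det _).mpr (isUnit_iff_ne_zero.mpr hdet))
    rwa [Matrix.rank_transpose_mul_self] at h
  rw [hrk, Fintype.card_coe] at hrank
  exact lt_irrefl _ hrank

end
end

section
/- Globalized RIP bound: suppose the globalized RIP constant δ_{k,𝓜} satisfies (1−δ_{k,𝓜})‖α‖₂² ≤ ‖Dα‖₂² ≤ (1+δ_{k,𝓜})‖α‖₂² for every α ∈ ℝ^m with supp α ∈ 𝒯. Then the generalized RIP constant δ_k^{(N)} of the global dictionary D_G, defined as the smallest δ with (1−δ)‖Γ‖₂² ≤ ‖D_GΓ‖₂² ≤ (1+δ)‖Γ‖₂² for all Γ with MΓ=0 and ‖Γ‖_{0,∞} ≤ k, satisfies δ_k^{(N)} ≤ (δ_{k,𝓜} + (n−1))/n. -/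
open Matrix

noncomputable section

/-- Globalized RIP bound: `δₖ^(N) ≤ (δ_{k,𝓜} + (n-1))/n`, expressed by the RIP inequalities
for `D_G` with constant `(δM + (n-1))/n` on all admissible `Γ`. -/
theorem generalized_RIP_bound (n m N k : ℕ) [NeZero N] (hn : 0 < n) (hnN : n ≤ N)
    (D : Matrix (Fin n) (Fin m) ℝ) (T : Set (Finset (Fin m))) (δM : ℝ)
    (hRIP : ∀ α : Fin m → ℝ, suppF α ∈ T →
      (1 - δM) * ∑ a, α a ^ 2 ≤ ∑ i, (D.mulVec α i) ^ 2 ∧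
      ∑ i, (D.mulVec α i) ^ 2 ≤ (1 + δM) * ∑ a, α a ^ 2)
    (hT : ∀ Γ : Fin N × Fin m → ℝ, (Mop N n m D).mulVec Γ = 0 →
      (∀ i, l0 (fun a => Γ (i, a)) ≤ k) → ∀ i, suppF (fun a => Γ (i, a)) ∈ T) :
    ∀ Γ : Fin N × Fin m → ℝ, (Mop N n m D).mulVec Γ = 0 →
      (∀ i, l0 (fun a => Γ (i, a)) ≤ k) →
      (1 - (δM + ((n : ℝ) - 1)) / n) * ∑ p, Γ p ^ 2 ≤
          ∑ x, ((DG N n m D).mulVec Γ x) ^ 2 ∧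
        ∑ x, ((DG N n m D).mulVec Γ x) ^ 2 ≤
          (1 + (δM + ((n : ℝ) - 1)) / n) * ∑ p, Γ p ^ 2 := by
  intro Γ hM hk
  have hn' : (0:ℝ) < n := by exact_mod_cast hn
  have hn1 : (1:ℝ) ≤ n := by exact_mod_cast hn
  set x : Fin N → ℝ := (DG N n m D).mulVec Γ with hx
  -- patch identity from MΓ = 0
  have key : ∀ i : Fin N, ∀ kk : Fin n,
      D.mulVec (fun a => Γ (i, a)) kk
        = x ⟨((i:ℕ) + (kk:ℕ)) % N, Nat.mod_lt _ (NeZero.pos N)⟩ := by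
    intro i kk
    have h0 : (Mop N n m D).mulVec Γ (i, kk) = 0 := congrFun hM (i, kk)
    have h1 : (Mop N n m D).mulVec Γ (i, kk)
        = D.mulVec (fun a => Γ (i, a)) kk - (Rop N n i).mulVec x kk := by
      simp only [Mop, Matrix.mulVec, dotProduct, Matrix.of_apply, Matrix.sub_apply, sub_mul]
      rw [Finset.sum_sub_distrib]
      congr 1
      · rw [Fintype.sum_prod_type]
        simp [Qop, ite_mul, Finset.sum_ite_eq, Finset.sum_ite_eq']
      · simp_rw [Matrix.mul_apply, Finset.sum_mul, mul_assoc, hx, Matrix.mulVec, dotProduct,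
          Finset.mul_sum]
        rw [Finset.sum_comm]
    have h2 : (Rop N n i).mulVec x kk
        = x ⟨((i:ℕ) + (kk:ℕ)) % N, Nat.mod_lt _ (NeZero.pos N)⟩ := by
      set e : Fin N := ⟨((i:ℕ) + (kk:ℕ)) % N, Nat.mod_lt _ (NeZero.pos N)⟩ with he
      have hcond : ∀ j : Fin N, ((j:ℕ) = ((i:ℕ) + (kk:ℕ)) % N) ↔ j = e := by
        intro j; rw [Fin.ext_iff]
      simp only [Rop, Matrix.mulVec, dotProduct, Matrix.of_apply, ite_mul, one_mul, zero_mul]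
      simp_rw [hcond]
      simp [Finset.sum_ite_eq', Finset.sum_ite_eq]
    rw [h1, h2] at h0
    exact sub_eq_zero.mp h0
  -- sum of squares identity
  have hsum : (n:ℝ) * ∑ j, x j ^ 2
      = ∑ i : Fin N, ∑ kk : Fin n, (D.mulVec (fun a => Γ (i, a)) kk) ^ 2 := by
    simp_rw [key]
    rw [Finset.sum_comm]
    have hinner : ∀ kk : Fin n,
        (∑ i : Fin N, x ⟨((i:ℕ) + (kk:ℕ)) % N, Nat.mod_lt _ (NeZero.pos N)⟩ ^ 2)
          = ∑ j, x j ^ 2 := by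
      intro kk
      set c : Fin N := ⟨(kk:ℕ) % N, Nat.mod_lt _ (NeZero.pos N)⟩ with hc
      have he : ∀ i : Fin N,
          (⟨((i:ℕ) + (kk:ℕ)) % N, Nat.mod_lt _ (NeZero.pos N)⟩ : Fin N) = i + c := by
        intro i; ext; simp [Fin.add_def, hc, Nat.add_mod_mod]
      simp_rw [he]
      exact Equiv.sum_comp (Equiv.addRight c) (fun j => x j ^ 2)
    rw [Finset.sum_congr rfl (fun kk _ => hinner kk)]
    simp [Finset.sum_const, mul_comm]
  have hT' := hT Γ hM hk
  set S : ℝ := ∑ p, Γ p ^ 2 with hS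
  have hS0 : 0 ≤ S := Finset.sum_nonneg fun p _ => sq_nonneg _
  set B : ℝ := ∑ i : Fin N, ∑ kk : Fin n, (D.mulVec (fun a => Γ (i, a)) kk) ^ 2 with hB
  have hSprod : S = ∑ i : Fin N, ∑ a : Fin m, Γ (i, a) ^ 2 := by
    rw [hS, Fintype.sum_prod_type]
  have hLow : (1 - δM) * S ≤ B := by
    rw [hSprod, Finset.mul_sum]
    exact Finset.sum_le_sum fun i _ => (hRIP _ (hT' i)).1
  have hHigh : B ≤ (1 + δM) * S := by
    rw [hSprod, Finset.mul_sum]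
    exact Finset.sum_le_sum fun i _ => (hRIP _ (hT' i)).2
  constructor
  · have hcoef : (1 - (δM + ((n : ℝ) - 1)) / n) = (1 - δM) / n := by
      field_simp; ring
    rw [hcoef, div_mul_eq_mul_div, div_le_iff₀ hn']
    calc (1 - δM) * S ≤ B := hLow
      _ = (n:ℝ) * ∑ j, x j ^ 2 := hsum.symm
      _ = (∑ j, x j ^ 2) * n := by ring
  · have hd : (δM + ((n:ℝ) - 1)) / n * n = δM + ((n:ℝ) - 1) :=
      div_mul_cancel₀ _ hn'.ne'
    have hc2 : (1 + (δM + ((n : ℝ) - 1)) / n) * S * n = S * n + (δM + ((n:ℝ) - 1)) * S := by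
      have : (1 + (δM + ((n : ℝ) - 1)) / n) * S * n
          = S * n + ((δM + ((n:ℝ) - 1)) / n * n) * S := by ring
      rw [this, hd]
    have h3 : (∑ j, x j ^ 2) * n ≤ (1 + (δM + ((n : ℝ) - 1)) / n) * S * n := by
      rw [hc2]
      have h4 : (n:ℝ) * ∑ j, x j ^ 2 ≤ (1 + δM) * S := hsum ▸ hHigh
      nlinarith [mul_nonneg hS0 (sub_nonneg.mpr hn1)]
    exact le_of_mul_le_mul_right h3 hn'
end
end

section
/- RIP-based stability of P_{0,∞}: suppose δ_{2s}^{(N)} < 1 is the generalized RIP constant of order 2s, x = D_G Γ₀ with ‖Γ₀‖_{0,∞} ≤ s and MΓ₀ = 0, and Γ̂ satisfies ‖Γ̂‖_{0,∞} ≤ s, MΓ̂ = 0, ‖D_GΓ̂ − x‖₂ ≤ ε and ‖D_GΓ₀ − x‖₂ ≤ ε. Then ‖Γ̂ − Γ₀‖₂² ≤ 4ε²/(1 − δ_{2s}^{(N)}). In particular, for ε = 0 the representation Γ₀ is unique among representations of sparsity at most s. -/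
open Matrix

noncomputable section

/-- RIP-based stability of `P₀,∞`: if `δ_{2s}^(N) < 1` then any two `ε`-feasible `s`-sparse
representations are within `4ε²/(1-δ)` of each other; in particular for `ε = 0` the
representation is unique. -/
theorem RIP_stability (n m N s : ℕ) [NeZero N] (hn : 0 < n) (hnN : n ≤ N)
    (D : Matrix (Fin n) (Fin m) ℝ) (δ ε : ℝ) (hδ : δ < 1) (hε : 0 ≤ ε)
    (hRIP : ∀ Γ : Fin N × Fin m → ℝ, (Mop N n m D).mulVec Γ = 0 →
      (∀ i, l0 (fun a => Γ (i, a)) ≤ 2 * s) →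
      (1 - δ) * ∑ p, Γ p ^ 2 ≤ ∑ x, ((DG N n m D).mulVec Γ x) ^ 2 ∧
      ∑ x, ((DG N n m D).mulVec Γ x) ^ 2 ≤ (1 + δ) * ∑ p, Γ p ^ 2)
    (x : Fin N → ℝ) (Γ₀ Γh : Fin N × Fin m → ℝ)
    (hx : x = (DG N n m D).mulVec Γ₀)
    (h0M : (Mop N n m D).mulVec Γ₀ = 0) (h0s : ∀ i, l0 (fun a => Γ₀ (i, a)) ≤ s)
    (hhM : (Mop N n m D).mulVec Γh = 0) (hhs : ∀ i, l0 (fun a => Γh (i, a)) ≤ s)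
    (h0ε : ∑ j, ((DG N n m D).mulVec Γ₀ j - x j) ^ 2 ≤ ε ^ 2)
    (hhε : ∑ j, ((DG N n m D).mulVec Γh j - x j) ^ 2 ≤ ε ^ 2) :
    (∑ p, (Γh p - Γ₀ p) ^ 2 ≤ 4 * ε ^ 2 / (1 - δ)) ∧ (ε = 0 → Γh = Γ₀) := by
  set Δ : Fin N × Fin m → ℝ := fun p => Γh p - Γ₀ p with hΔ
  have hΔeq : Δ = Γh - Γ₀ := rfl
  have hMΔ : (Mop N n m D).mulVec Δ = 0 := by
    rw [hΔeq, Matrix.mulVec_sub, hhM, h0M, sub_zero]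
  have hl0 : ∀ i, l0 (fun a => Δ (i, a)) ≤ 2 * s := by
    intro i
    have hsub : Function.support (fun a => Δ (i, a)) ⊆
        Function.support (fun a => Γh (i, a)) ∪ Function.support (fun a => Γ₀ (i, a)) := by
      intro a ha
      by_contra hc
      simp only [Set.mem_union, Function.mem_support, not_or, not_not] at hc
      exact ha (by simp [hΔ, hc.1, hc.2])
    calc l0 (fun a => Δ (i, a)) ≤ (Function.support (fun a => Γh (i, a)) ∪
          Function.support (fun a => Γ₀ (i, a))).ncard :=
        Set.ncard_le_ncard hsub ((Set.toFinite _).union (Set.toFinite _))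
      _ ≤ l0 (fun a => Γh (i, a)) + l0 (fun a => Γ₀ (i, a)) :=
        Set.ncard_union_le _ _
      _ ≤ 2 * s := by have := hhs i; have := h0s i; omega
  obtain ⟨hlow, _⟩ := hRIP Δ hMΔ hl0
  -- bound ‖D_G Δ‖² ≤ 4 ε²
  set a : Fin N → ℝ := fun j => (DG N n m D).mulVec Γh j - x j with ha
  set b : Fin N → ℝ := fun j => (DG N n m D).mulVec Γ₀ j - x j with hb
  have hDΔ : ∀ j, (DG N n m D).mulVec Δ j = a j - b j := by
    intro j
    simp only [ha, hb, hΔeq, Matrix.mulVec_sub, Pi.sub_apply]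
    ring
  have hA : ∑ j, a j ^ 2 ≤ ε ^ 2 := hhε
  have hB : ∑ j, b j ^ 2 ≤ ε ^ 2 := h0ε
  have hCS : (∑ j, a j * b j) ^ 2 ≤ (∑ j, a j ^ 2) * (∑ j, b j ^ 2) :=
    Finset.sum_mul_sq_le_sq_mul_sq Finset.univ a b
  have hCbound : -(∑ j, a j * b j) ≤ ε ^ 2 := by
    nlinarith [Finset.sum_nonneg (fun j (_ : j ∈ Finset.univ) => sq_nonneg (a j)),
      Finset.sum_nonneg (fun j (_ : j ∈ Finset.univ) => sq_nonneg (b j)), sq_nonneg ε]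
  have hD4 : ∑ j, ((DG N n m D).mulVec Δ j) ^ 2 ≤ 4 * ε ^ 2 := by
    have hexp : ∑ j, ((DG N n m D).mulVec Δ j) ^ 2
        = ∑ j, a j ^ 2 - 2 * (∑ j, a j * b j) + ∑ j, b j ^ 2 := by
      rw [Finset.mul_sum, ← Finset.sum_sub_distrib, ← Finset.sum_add_distrib]
      apply Finset.sum_congr rfl
      intro j _
      rw [hDΔ j]; ring
    rw [hexp]; nlinarith
  have hΔnonneg : (0 : ℝ) ≤ ∑ p, Δ p ^ 2 :=
    Finset.sum_nonneg (fun p _ => sq_nonneg _)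
  have hkey : (1 - δ) * ∑ p, Δ p ^ 2 ≤ 4 * ε ^ 2 := le_trans hlow hD4
  have hpos : (0 : ℝ) < 1 - δ := by linarith
  constructor
  · rw [le_div_iff₀ hpos]
    calc (∑ p, (Γh p - Γ₀ p) ^ 2) * (1 - δ) = (1 - δ) * ∑ p, Δ p ^ 2 := by
          rw [mul_comm]
      _ ≤ 4 * ε ^ 2 := hkey
  · intro hε0
    subst hε0
    have hzero : ∑ p, Δ p ^ 2 ≤ 0 := by nlinarith
    have : ∀ p ∈ Finset.univ, Δ p ^ 2 = 0 := by
      intro p _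
      have := Finset.sum_nonneg (fun q (_ : q ∈ Finset.univ) => sq_nonneg (Δ q))
      have h := (Finset.sum_eq_zero_iff_of_nonneg
        (fun q (_ : q ∈ Finset.univ) => sq_nonneg (Δ q))).mp (le_antisymm hzero this)
      exact h p (Finset.mem_univ p)
    funext p
    have := this p (Finset.mem_univ p)
    have : Δ p = 0 := by nlinarith [this]
    simpa [hΔ, sub_eq_zero] using this
end
end

section
/- Contraction property of patch averaging: let P_{s_i} ∈ ℝ^{n×n}, i = 1,…,N, be orthogonal projection matrices, and let M_A = (1/n)Σ_{i=1}^{N} R_iᵀP_{s_i}R_i, where R_i are the cyclic patch extraction operators and n divides N. Then the operator norm ‖M_A‖₂ ≤ 1. -/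
open Matrix

noncomputable section

/-! Each `Rᵢᵀ Pᵢ Rᵢ` is a conjugate of a projection, so in the Loewner order
`0 ≤ Rᵢᵀ Pᵢ Rᵢ ≤ Rᵢᵀ Rᵢ`; since every coordinate lies in exactly `n` cyclic patches,
`∑ Rᵢᵀ Rᵢ = n • 1`, whence `0 ≤ M_A ≤ 1`. For a symmetric matrix between `0` and `1` every
Rayleigh quotient lies in `[0, 1]`, and the Rayleigh quotients determine the operator norm. -/

open scoped MatrixOrder

lemma Rop_apply {N : ℕ} [NeZero N] (n : ℕ) (i : Fin N) (k : Fin n) (j : Fin N) :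
    Rop N n i k j = if j = i + Fin.ofNat N k then 1 else 0 := by
  simp only [Rop, of_apply, Fin.ext_iff, Fin.val_add, Fin.val_ofNat, Nat.add_mod_mod]

lemma sum_transpose_Rop_mul_Rop (N n : ℕ) :
    ∑ i, (Rop N n i)ᵀ * Rop N n i = (n : ℝ) • 1 := by
  rcases N with _ | N
  · exact Subsingleton.elim _ _
  ext a b
  simp only [Matrix.sum_apply, mul_apply, transpose_apply, Rop_apply, Matrix.smul_apply, one_apply]
  rw [Finset.sum_comm]
  simp only [mul_ite, mul_one, mul_zero, ← sub_eq_iff_eq_add]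
  simp [eq_comm]

lemma Matrix.isStarProjection_of_transpose_eq_of_mul_self_eq {m : Type*} [Fintype m]
    {P : Matrix m m ℝ} (hsymm : Pᵀ = P) (hidem : P * P = P) : IsStarProjection P :=
  ⟨hidem, by
    rw [IsSelfAdjoint, star_eq_conjTranspose, conjTranspose_eq_transpose_of_trivial, hsymm]⟩

lemma Matrix.transpose_mul_mul_nonneg {m k : Type*} [Fintype m] [Fintype k]
    {P : Matrix m m ℝ} (hP : 0 ≤ P) (R : Matrix m k ℝ) : 0 ≤ Rᵀ * P * R := by
  simpa only [conjTranspose_eq_transpose_of_trivial] using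
    (hP.posSemidef.conjTranspose_mul_mul_same R).nonneg

lemma Matrix.transpose_mul_mul_le_transpose_mul {m k : Type*} [Fintype m] [Fintype k]
    [DecidableEq m] {P : Matrix m m ℝ} (hP : P ≤ 1) (R : Matrix m k ℝ) :
    Rᵀ * P * R ≤ Rᵀ * R := by
  rw [← sub_nonneg]
  simpa only [Matrix.mul_sub, Matrix.sub_mul, Matrix.mul_one] using
    transpose_mul_mul_nonneg (sub_nonneg.mpr hP) R

theorem Matrix.l2_opNorm_le_one_of_nonneg_of_le_one {m : Type*} [Fintype m] [DecidableEq m]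
    {A : Matrix m m ℝ} (h0 : 0 ≤ A) (h1 : A ≤ 1) : ‖toEuclideanCLM (𝕜 := ℝ) A‖ ≤ 1 := by
  have hsymm : (toEuclideanCLM (𝕜 := ℝ) A : EuclideanSpace ℝ m →ₗ[ℝ] _).IsSymmetric := by
    rw [coe_toEuclideanCLM_eq_toEuclideanLin, isSymmetric_toEuclideanLin_iff]
    exact h0.posSemidef.isHermitian
  refine (ContinuousLinearMap.norm_eq_iSup_rayleighQuotient _ hsymm).trans_le
    (ciSup_le fun x => ?_)
  have hquad : ContinuousLinearMap.reApplyInnerSelf (toEuclideanCLM (𝕜 := ℝ) A) x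
      = x.ofLp ⬝ᵥ A *ᵥ x.ofLp := by
    rw [ContinuousLinearMap.reApplyInnerSelf_apply, real_inner_comm, inner_toEuclideanCLM]
    rfl
  have hnonneg : 0 ≤ x.ofLp ⬝ᵥ A *ᵥ x.ofLp := h0.posSemidef.dotProduct_mulVec_nonneg x.ofLp
  have hle : x.ofLp ⬝ᵥ A *ᵥ x.ofLp ≤ ‖x‖ ^ 2 := by
    have hx := (le_iff.mp h1).dotProduct_mulVec_nonneg x.ofLp
    rw [sub_mulVec, one_mulVec, dotProduct_sub, sub_nonneg, star_trivial] at hx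
    rwa [← real_inner_self_eq_norm_sq, EuclideanSpace.inner_eq_star_dotProduct, star_trivial]
  rw [ContinuousLinearMap.rayleighQuotient, hquad, abs_div, abs_of_nonneg hnonneg, abs_sq]
  exact div_le_one_of_le₀ hle (sq_nonneg _)

theorem MA_contraction_general (n N : ℕ) (hn : 0 < n)
    (P : Fin N → Matrix (Fin n) (Fin n) ℝ)
    (hPsym : ∀ i, (P i)ᵀ = P i) (hPidem : ∀ i, P i * P i = P i) :
    ‖Matrix.toEuclideanCLM (𝕜 := ℝ)
      ((1 / (n : ℝ)) • ∑ i, (Rop N n i)ᵀ * P i * Rop N n i)‖ ≤ 1 := by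
  have hP i : IsStarProjection (P i) :=
    isStarProjection_of_transpose_eq_of_mul_self_eq (hPsym i) (hPidem i)
  have hnonneg : 0 ≤ ∑ i, (Rop N n i)ᵀ * P i * Rop N n i :=
    Finset.sum_nonneg fun i _ => transpose_mul_mul_nonneg (hP i).nonneg _
  refine l2_opNorm_le_one_of_nonneg_of_le_one (smul_nonneg (by positivity) hnonneg) ?_
  calc (1 / (n : ℝ)) • ∑ i, (Rop N n i)ᵀ * P i * Rop N n i
      ≤ (1 / (n : ℝ)) • ∑ i, (Rop N n i)ᵀ * Rop N n i := by
        gcongr with i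
        exact transpose_mul_mul_le_transpose_mul (hP i).le_one _
    _ = 1 := by
        rw [sum_transpose_Rop_mul_Rop, smul_smul, one_div_mul_cancel (by positivity), one_smul]

/-- Contraction property of patch averaging: `‖M_A‖₂ ≤ 1`. -/
theorem MA_contraction (n N : ℕ) (hn : 0 < n) (hdvd : n ∣ N)
    (P : Fin N → Matrix (Fin n) (Fin n) ℝ)
    (hPsym : ∀ i, (P i)ᵀ = P i) (hPidem : ∀ i, P i * P i = P i) :
    ‖Matrix.toEuclideanCLM (𝕜 := ℝ)
      ((1 / (n : ℝ)) • ∑ i, (Rop N n i)ᵀ * P i * Rop N n i)‖ ≤ 1 :=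
  MA_contraction_general n N hn P hPsym hPidem
end
end

section
/- Injectivity and dimension identity: let 𝒮 = (s_1,…,s_P) be a support sequence such that each D_{s_i} has full column rank, let D_G^{(𝒮)} be the global dictionary restricted to the columns in 𝒮, let M_*^{(𝒮)} be the restriction of the overlap-constraint matrix M_* to those columns, and let A_𝒮 be the stacked matrix with block rows (I_n − P_{s_i})R_i, where P_{s_i} is the orthogonal projection onto the column space of D_{s_i}. Then dim ker A_𝒮 = dim ker M_*^{(𝒮)}. -/
open Matrix

noncomputable section

/-!
Both kernels are isomorphic to the space of patch families `(yᵢ)` with `yᵢ ∈ span D_{sᵢ}` that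
agree on overlaps, `S_B yᵢ = S_T yᵢ₊₁`. A signal `x` with `A_𝒮 x = 0` is sent to its patches
`yᵢ = Rᵢ x`; this is injective because `x` is read off the first entries of its patches, and it
hits every consistent family because consistency propagates entries along the cycle. A coefficient
vector `Γ` in `ker M_*^{(𝒮)}` is sent to `yᵢ = D_{sᵢ} Γᵢ`, which is injective by the full column
rank of each `D_{sᵢ}`.
-/

open Fin.NatCast

lemma Fin.sum_ite_val_eq {N : ℕ} {M : Type*} [AddCommMonoid M] (t : Fin N) {c : ℕ}
    (hc : (t : ℕ) = c) (v : Fin N → M) :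
    (∑ j : Fin N, if (j : ℕ) = c then v j else 0) = v t := by
  subst hc
  simp [Fin.val_inj]

lemma Rop_mulVec_apply {N n : ℕ} [NeZero N] (i : Fin N) (x : Fin N → ℝ) (k : Fin n) :
    (Rop N n i *ᵥ x) k = x (i + (k : ℕ)) := by
  simp only [Rop, mulVec, dotProduct, of_apply, ite_mul, one_mul, zero_mul]
  exact Fin.sum_ite_val_eq _ (by simp [Fin.val_add]) x

lemma SBop_mulVec_apply {n : ℕ} (v : Fin n → ℝ) (r : Fin (n - 1)) :
    (SBop n *ᵥ v) r = v ⟨r + 1, by omega⟩ := by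
  simp only [SBop, mulVec, dotProduct, of_apply, ite_mul, one_mul, zero_mul]
  exact Fin.sum_ite_val_eq _ (by rfl) v

lemma STop_mulVec_apply {n : ℕ} (v : Fin n → ℝ) (r : Fin (n - 1)) :
    (STop n *ᵥ v) r = v ⟨r, by omega⟩ := by
  simp only [STop, mulVec, dotProduct, of_apply, ite_mul, one_mul, zero_mul]
  exact Fin.sum_ite_val_eq _ (by rfl) v

lemma Matrix.one_sub_mulVec_eq_zero_iff {ι R : Type*} [Fintype ι] [DecidableEq ι] [CommRing R]
    {P : Matrix ι ι R} (hP : IsIdempotentElem P) (v : ι → R) :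
    (1 - P) *ᵥ v = 0 ↔ v ∈ LinearMap.range P.mulVecLin := by
  rw [sub_mulVec, one_mulVec, sub_eq_zero]
  constructor
  · intro h
    exact ⟨v, h.symm⟩
  · rintro ⟨w, rfl⟩
    simp only [mulVecLin_apply, mulVec_mulVec, hP.eq]

lemma Submodule.finrank_comap_eq_of_injective {K V W : Type*} [DivisionRing K]
    [AddCommGroup V] [Module K V] [AddCommGroup W] [Module K W]
    {f : V →ₗ[K] W} (hf : Function.Injective f) (p : Submodule K W) :
    Module.finrank K (p.comap f) = Module.finrank K (LinearMap.range f ⊓ p : Submodule K W) := by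
  rw [← Submodule.map_comap_eq]
  exact (Submodule.equivMapOfInjective f hf _).finrank_eq

section Patches

variable {N n : ℕ}

variable (N n) in
def patchMap : (Fin N → ℝ) →ₗ[ℝ] Fin N → Fin n → ℝ :=
  LinearMap.pi fun i => (Rop N n i).mulVecLin

variable [NeZero N]

variable (N n) in
def consistentPatches : Submodule ℝ (Fin N → Fin n → ℝ) where
  carrier := {y | ∀ i, SBop n *ᵥ y i = STop n *ᵥ y (i + 1)}
  add_mem' hy hz i := by simp only [Pi.add_apply, mulVec_add, hy i, hz i]
  zero_mem' i := by simp only [Pi.zero_apply, mulVec_zero]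
  smul_mem' c y hy i := by simp only [Pi.smul_apply, mulVec_smul, hy i]

lemma mem_consistentPatches {y : Fin N → Fin n → ℝ} :
    y ∈ consistentPatches N n ↔ ∀ i, SBop n *ᵥ y i = STop n *ᵥ y (i + 1) :=
  Iff.rfl

lemma mem_consistentPatches_iff_forall_apply {y : Fin N → Fin n → ℝ} :
    y ∈ consistentPatches N n ↔
      ∀ i (k : ℕ) (hk : k + 1 < n), y i ⟨k + 1, hk⟩ = y (i + 1) ⟨k, by omega⟩ := by
  refine forall_congr' fun i => ⟨fun h k hk => ?_, fun h => funext fun r => ?_⟩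
  · simpa [SBop_mulVec_apply, STop_mulVec_apply] using congrFun h ⟨k, by omega⟩
  · simpa [SBop_mulVec_apply, STop_mulVec_apply] using h r (by omega)

lemma apply_eq_of_mem_consistentPatches {y : Fin N → Fin n → ℝ}
    (hy : y ∈ consistentPatches N n) (i : Fin N) (k : ℕ) (hk : k < n) :
    y i ⟨k, hk⟩ = y (i + k) ⟨0, by omega⟩ := by
  induction k generalizing i with
  | zero => simp
  | succ k ih =>
    rw [mem_consistentPatches_iff_forall_apply.1 hy i k hk, ih]
    congr 1
    push_cast
    abel

lemma patchMap_apply_zero (hn : 0 < n) (x : Fin N → ℝ) (i : Fin N) :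
    patchMap N n x i ⟨0, hn⟩ = x i := by
  simp [patchMap, Rop_mulVec_apply]

lemma patchMap_injective (hn : 0 < n) : Function.Injective (patchMap N n) := fun x y h =>
  funext fun i => by rw [← patchMap_apply_zero hn x, h, patchMap_apply_zero]

lemma range_patchMap (hn : 0 < n) : LinearMap.range (patchMap N n) = consistentPatches N n := by
  ext y
  constructor
  · rintro ⟨x, rfl⟩
    rw [mem_consistentPatches_iff_forall_apply]
    intro i k hk
    simp only [patchMap, LinearMap.pi_apply, mulVecLin_apply, Rop_mulVec_apply]
    congr 1
    push_cast
    abel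
  · intro hy
    refine ⟨fun j => y j ⟨0, hn⟩, funext fun i => funext fun k => ?_⟩
    simp only [patchMap, LinearMap.pi_apply, mulVecLin_apply, Rop_mulVec_apply]
    exact (apply_eq_of_mem_consistentPatches hy i k k.isLt).symm

end Patches

section Synthesis

variable {ι : Type*} {n m : ℕ} {D : Matrix (Fin n) (Fin m) ℝ} {s : ι → Finset (Fin m)}

variable (D s) in
/-- `Γ ↦ (D_{sᵢ} Γᵢ)ᵢ`. -/
def patchSynthesis : ((i : ι) × {a // a ∈ s i} → ℝ) →ₗ[ℝ] ι → Fin n → ℝ :=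
  LinearMap.pi fun i => (D.submatrix id Subtype.val).mulVecLin ∘ₗ
    LinearMap.funLeft ℝ ℝ (Sigma.mk (β := fun i => {a // a ∈ s i}) i)

lemma patchSynthesis_apply (Γ : (i : ι) × {a // a ∈ s i} → ℝ) (i : ι) :
    patchSynthesis D s Γ i = D.submatrix id Subtype.val *ᵥ fun a => Γ ⟨i, a⟩ :=
  rfl

lemma patchSynthesis_injective
    (hD : ∀ i, LinearIndependent ℝ (fun a : {a // a ∈ s i} => fun r => D r (a : Fin m))) :
    Function.Injective (patchSynthesis D s) := fun _ _ h => funext fun ⟨i, a⟩ =>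
  congrFun (mulVec_injective_iff.2 (hD i) (congrFun h i)) a

lemma range_patchSynthesis : LinearMap.range (patchSynthesis D s) =
    Submodule.pi Set.univ fun i =>
      Submodule.span ℝ (Set.range fun a : {a // a ∈ s i} => fun r => D r (a : Fin m)) := by
  have hcol : ∀ i, Submodule.span ℝ (Set.range fun a : {a // a ∈ s i} => fun r => D r a) =
      LinearMap.range (D.submatrix id Subtype.val).mulVecLin := fun i =>
    (range_mulVecLin _).symm
  simp_rw [hcol]
  ext y
  simp only [LinearMap.mem_range, Submodule.mem_pi, Set.mem_univ, true_implies]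
  constructor
  · rintro ⟨Γ, rfl⟩ i
    exact ⟨_, (patchSynthesis_apply Γ i).symm⟩
  · intro hy
    choose γ hγ using hy
    exact ⟨Sigma.uncurry γ, funext hγ⟩

end Synthesis

section Kernels

variable {N n m : ℕ}

/-- The matrix `A_𝒮`. -/
def residualMatrix (P : Fin N → Matrix (Fin n) (Fin n) ℝ) : Matrix (Fin N × Fin n) (Fin N) ℝ :=
  of fun q j => ((1 - P q.1) * Rop N n q.1 : Matrix (Fin n) (Fin N) ℝ) q.2 j

lemma ker_residualMatrix {P : Fin N → Matrix (Fin n) (Fin n) ℝ}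
    (hP : ∀ i, IsIdempotentElem (P i)) :
    LinearMap.ker (residualMatrix P).mulVecLin =
      (Submodule.pi Set.univ fun i => LinearMap.range (P i).mulVecLin).comap (patchMap N n) := by
  ext x
  simp only [LinearMap.mem_ker, Submodule.mem_comap, Submodule.mem_pi, Set.mem_univ,
    true_implies, ← one_sub_mulVec_eq_zero_iff (hP _), mulVecLin_apply, funext_iff, Prod.forall]
  simp only [patchMap, LinearMap.pi_apply, mulVecLin_apply, mulVec_mulVec]
  rfl

variable [NeZero N]

/-- The matrix `M_*^{(𝒮)}`. -/
def restrictedOverlapMatrix (D : Matrix (Fin n) (Fin m) ℝ) (s : Fin N → Finset (Fin m)) :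
    Matrix (Fin N × Fin (n - 1)) ((i : Fin N) × {a // a ∈ s i}) ℝ :=
  of fun q p =>
    if p.1 = q.1 then (SBop n * D) q.2 (p.2 : Fin m)
    else if p.1 = q.1 + 1 then -((STop n * D) q.2 (p.2 : Fin m)) else 0

lemma restrictedOverlapMatrix_mulVec_apply (D : Matrix (Fin n) (Fin m) ℝ)
    (s : Fin N → Finset (Fin m)) (Γ : (i : Fin N) × {a // a ∈ s i} → ℝ) {i : Fin N}
    (hi : i ≠ i + 1) (r : Fin (n - 1)) :
    (restrictedOverlapMatrix D s *ᵥ Γ) (i, r) =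
      (SBop n *ᵥ patchSynthesis D s Γ i) r - (STop n *ᵥ patchSynthesis D s Γ (i + 1)) r := by
  simp only [patchSynthesis_apply, mulVec_mulVec]
  rw [mulVec, dotProduct, Fintype.sum_sigma, Fintype.sum_eq_add i (i + 1) hi]
  · simp only [restrictedOverlapMatrix, of_apply, ↓reduceIte, if_neg hi.symm, neg_mul,
      Finset.sum_neg_distrib, ← sub_eq_add_neg]
    rfl
  · rintro j ⟨hji, hji'⟩
    simp [restrictedOverlapMatrix, hji, hji']

lemma ker_restrictedOverlapMatrix (hnN : n ≤ N) (D : Matrix (Fin n) (Fin m) ℝ)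
    (s : Fin N → Finset (Fin m)) :
    LinearMap.ker (restrictedOverlapMatrix D s).mulVecLin =
      (consistentPatches N n).comap (patchSynthesis D s) := by
  ext Γ
  simp only [LinearMap.mem_ker, Submodule.mem_comap, mulVecLin_apply, mem_consistentPatches,
    funext_iff, Prod.forall]
  refine forall_congr' fun i => forall_congr' fun r => ?_
  -- a row index `r` exists only if `2 ≤ n ≤ N`, and then `1 ≠ 0` in `Fin N`
  have hi : i ≠ i + 1 := by
    simp only [ne_eq, left_eq_add, Fin.one_eq_zero_iff]
    have := r.isLt
    omega
  rw [restrictedOverlapMatrix_mulVec_apply D s Γ hi, Pi.zero_apply, sub_eq_zero]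

end Kernels

theorem dim_ker_AS_eq_general (n m N : ℕ) [NeZero N] (hn : 0 < n) (hnN : n ≤ N)
    (D : Matrix (Fin n) (Fin m) ℝ) (s : Fin N → Finset (Fin m))
    (hfull : ∀ i, LinearIndependent ℝ
      (fun a : {a // a ∈ s i} => fun r : Fin n => D r (a : Fin m)))
    (P : Fin N → Matrix (Fin n) (Fin n) ℝ)
    (hPidem : ∀ i, P i * P i = P i)
    (hPrange : ∀ i, LinearMap.range (P i).mulVecLin =
      Submodule.span ℝ (Set.range fun a : {a // a ∈ s i} => fun r : Fin n => D r (a : Fin m)))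
    (AS : Matrix (Fin N × Fin n) (Fin N) ℝ)
    (hAS : AS = Matrix.of fun q j => (((1 - P q.1) * Rop N n q.1 : Matrix (Fin n) (Fin N) ℝ) q.2 j))
    (MS : Matrix (Fin N × Fin (n - 1)) ((i : Fin N) × {a // a ∈ s i}) ℝ)
    (hMS : MS = Matrix.of fun q p =>
      if p.1 = q.1 then (SBop n * D) q.2 (p.2 : Fin m)
      else if p.1 = q.1 + 1 then -((STop n * D) q.2 (p.2 : Fin m)) else 0) :
    Module.finrank ℝ (LinearMap.ker AS.mulVecLin) =
      Module.finrank ℝ (LinearMap.ker MS.mulVecLin) := by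
  have hA : AS = residualMatrix P := hAS
  have hM : MS = restrictedOverlapMatrix D s := hMS
  rw [hA, hM, ker_residualMatrix hPidem, ker_restrictedOverlapMatrix hnN,
    Submodule.finrank_comap_eq_of_injective (patchMap_injective hn),
    Submodule.finrank_comap_eq_of_injective (patchSynthesis_injective hfull),
    range_patchMap hn, range_patchSynthesis, inf_comm, funext hPrange]

/-- Injectivity and dimension identity: `dim ker A_𝒮 = dim ker M_*^(𝒮)` when each `D_{sᵢ}`
has full column rank and `P_{sᵢ}` is the orthogonal projection onto its column span. -/
theorem dim_ker_AS_eq (n m N : ℕ) [NeZero N] (hn : 0 < n) (hnN : n ≤ N)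
    (D : Matrix (Fin n) (Fin m) ℝ) (s : Fin N → Finset (Fin m))
    (hfull : ∀ i, LinearIndependent ℝ
      (fun a : {a // a ∈ s i} => fun r : Fin n => D r (a : Fin m)))
    (P : Fin N → Matrix (Fin n) (Fin n) ℝ)
    (hPsym : ∀ i, (P i)ᵀ = P i) (hPidem : ∀ i, P i * P i = P i)
    (hPrange : ∀ i, LinearMap.range (P i).mulVecLin =
      Submodule.span ℝ (Set.range fun a : {a // a ∈ s i} => fun r : Fin n => D r (a : Fin m)))
    (AS : Matrix (Fin N × Fin n) (Fin N) ℝ)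
    (hAS : AS = Matrix.of fun q j => (((1 - P q.1) * Rop N n q.1 : Matrix (Fin n) (Fin N) ℝ) q.2 j))
    (MS : Matrix (Fin N × Fin (n - 1)) ((i : Fin N) × {a // a ∈ s i}) ℝ)
    (hMS : MS = Matrix.of fun q p =>
      if p.1 = q.1 then (SBop n * D) q.2 (p.2 : Fin m)
      else if p.1 = q.1 + 1 then -((STop n * D) q.2 (p.2 : Fin m)) else 0) :
    Module.finrank ℝ (LinearMap.ker AS.mulVecLin) =
      Module.finrank ℝ (LinearMap.ker MS.mulVecLin) :=
  dim_ker_AS_eq_general n m N hn hnN D s hfull P hPidem hPrange AS hAS MS hMS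

end
end

section
/- Necessary rank condition for neighboring supports: let x ∈ 𝓜 with x ≠ 0 and let Γ = (α_1,…,α_P) be a minimal representation (x = D_GΓ, MΓ = 0, each D_{supp α_i} full rank). Let s_i = supp α_i. Then for each i (cyclically), rank[S_B D_{s_i} −S_T D_{s_{i+1}}] < |s_i| + |s_{i+1}|, i.e., the concatenated matrix of bottom-shifted and negated top-shifted atom submatrices is column-rank-deficient. -/
open Matrix

noncomputable section

theorem rank_lt_of_ker {ι : Type*} [Fintype ι] [DecidableEq ι] {k : ℕ} (A : Matrix (Fin k) ι ℝ)
    (v : ι → ℝ) (hv : v ≠ 0) (hAv : A.mulVec v = 0) : A.rank < Fintype.card ι := by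
  have h := LinearMap.finrank_range_add_finrank_ker A.mulVecLin
  have hdom : Module.finrank ℝ (ι → ℝ) = Fintype.card ι := Module.finrank_fintype_fun_eq_card ℝ
  have hker : 0 < Module.finrank ℝ (LinearMap.ker A.mulVecLin) := by
    rw [Module.finrank_pos_iff]
    refine nontrivial_of_ne ⟨v, by simpa [Matrix.mulVecLin_apply] using hAv⟩ 0 ?_
    intro h0
    exact hv (by simpa using congrArg Subtype.val h0)
  rw [Matrix.rank]
  omega

theorem shift_eq (n m N : ℕ) [NeZero N] (D : Matrix (Fin n) (Fin m) ℝ) (Γ : Fin N × Fin m → ℝ)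
    (hM : (Mop N n m D).mulVec Γ = 0) (i : Fin N) (k : ℕ) (hk : k + 1 < n) :
    (∑ a, D ⟨k+1, hk⟩ a * Γ (i, a)) = ∑ a, D ⟨k, by omega⟩ a * Γ (i+1, a) := by
  have hmod : ((i : ℕ) + (k+1)) % N = (((i+1 : Fin N) : ℕ) + k) % N := by
    have h1 : ((i+1 : Fin N) : ℕ) = ((i : ℕ) + 1 % N) % N := by
      rw [Fin.add_def]; simp [Fin.val_one']
    have e : (((i : ℕ) + 1 % N) % N + k) % N = ((i : ℕ) + 1 + k) % N :=
      ((Nat.mod_modEq _ N).add_right k).trans (((Nat.mod_modEq 1 N).add_left (i:ℕ)).add_right k)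
    rw [h1, e]; ring_nf
  have hrow : ∀ t : Fin N, Rop N n i ⟨k+1, hk⟩ t = Rop N n (i+1) ⟨k, by omega⟩ t := by
    intro t; simp only [Rop, Matrix.of_apply, hmod]
  have hRD : ∀ p, (Rop N n i * DG N n m D) ⟨k+1, hk⟩ p
      = (Rop N n (i+1) * DG N n m D) ⟨k, by omega⟩ p := by
    intro p; simp only [Matrix.mul_apply, hrow]
  have h1 := congrFun hM (i, ⟨k+1, hk⟩)
  have h2 := congrFun hM (i+1, ⟨k, by omega⟩)
  simp only [Matrix.mulVec, dotProduct, Mop, Matrix.of_apply, Pi.zero_apply, Matrix.sub_apply,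
    sub_mul, Finset.sum_sub_distrib, Qop] at h1 h2
  rw [Fintype.sum_prod_type] at h1 h2
  simp only [ite_mul, zero_mul, Finset.sum_ite_irrel, Finset.sum_const_zero, Finset.sum_ite_eq',
    Finset.mem_univ, if_true] at h1 h2
  have hS : (∑ p : Fin N × Fin m, (Rop N n i * DG N n m D) ⟨k+1, hk⟩ p * Γ p)
      = ∑ p : Fin N × Fin m, (Rop N n (i+1) * DG N n m D) ⟨k, by omega⟩ p * Γ p :=
    Finset.sum_congr rfl fun p _ => by rw [hRD p]
  linarith [hS]

theorem SBD_apply (n m : ℕ) (D : Matrix (Fin n) (Fin m) ℝ) (r : Fin (n-1)) (a : Fin m) :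
    (SBop n * D) r a = D ⟨(r:ℕ)+1, by have := r.isLt; omega⟩ a := by
  have hc : ∀ j : Fin n, ((j:ℕ) = (r:ℕ)+1) = (j = ⟨(r:ℕ)+1, by have := r.isLt; omega⟩) := by
    intro j; simp [Fin.ext_iff]
  simp only [Matrix.mul_apply, SBop, Matrix.of_apply, hc, ite_mul, one_mul, zero_mul,
    Finset.sum_ite_eq', Finset.mem_univ, if_true]

theorem STD_apply (n m : ℕ) (D : Matrix (Fin n) (Fin m) ℝ) (r : Fin (n-1)) (a : Fin m) :
    (STop n * D) r a = D ⟨(r:ℕ), by have := r.isLt; omega⟩ a := by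
  have hc : ∀ j : Fin n, ((j:ℕ) = (r:ℕ)) = (j = ⟨(r:ℕ), by have := r.isLt; omega⟩) := by
    intro j; simp [Fin.ext_iff]
  simp only [Matrix.mul_apply, STop, Matrix.of_apply, hc, ite_mul, one_mul, zero_mul,
    Finset.sum_ite_eq', Finset.mem_univ, if_true]

/-- Necessary rank condition for neighboring supports: for a nonzero patch-sparse signal with a
minimal representation `Γ`, each concatenated matrix `[S_B D_{sᵢ}  -S_T D_{sᵢ₊₁}]` is
column-rank-deficient (with the convention `rank ∅ = -∞`, encoded by `⊥ : WithBot ℕ`). -/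
theorem neighbor_rank_condition (n m N : ℕ) [NeZero N] (hn : 0 < n) (hnN : n ≤ N)
    (D : Matrix (Fin n) (Fin m) ℝ) (Γ : Fin N × Fin m → ℝ)
    (s : Fin N → Finset (Fin m)) (hs : ∀ i, s i = suppF fun a => Γ (i, a))
    (hM : (Mop N n m D).mulVec Γ = 0)
    (hx : (DG N n m D).mulVec Γ ≠ 0)
    (hfull : ∀ i, LinearIndependent ℝ
      (fun a : {a // a ∈ s i} => fun r : Fin n => D r (a : Fin m))) :
    ∀ i : Fin N,
      (if s i = ∅ ∧ s (i + 1) = ∅ then (⊥ : WithBot ℕ) else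
        (((Matrix.of fun r : Fin (n - 1) =>
            Sum.elim (fun a : {a // a ∈ s i} => (SBop n * D) r (a : Fin m))
              (fun a : {a // a ∈ s (i + 1)} => -((STop n * D) r (a : Fin m))) :
          Matrix (Fin (n - 1)) ({a // a ∈ s i} ⊕ {a // a ∈ s (i + 1)}) ℝ).rank : ℕ) :
            WithBot ℕ))
      < ((((s i).card + (s (i + 1)).card : ℕ)) : WithBot ℕ) := by
  intro i
  by_cases hempty : s i = ∅ ∧ s (i + 1) = ∅
  · rw [if_pos hempty]
    exact WithBot.bot_lt_coe _
  · rw [if_neg hempty]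
    have hsupp : ∀ (j : Fin N) a, a ∉ s j → Γ (j, a) = 0 := by
      intro j a ha
      rw [hs j] at ha
      simpa [suppF, Set.Finite.mem_toFinset, Function.mem_support] using ha
    have hsupp' : ∀ (j : Fin N) a, a ∈ s j → Γ (j, a) ≠ 0 := by
      intro j a ha
      rw [hs j] at ha
      simpa [suppF, Set.Finite.mem_toFinset, Function.mem_support] using ha
    set A : Matrix (Fin (n - 1)) ({a // a ∈ s i} ⊕ {a // a ∈ s (i + 1)}) ℝ :=
      Matrix.of fun r => Sum.elim (fun a : {a // a ∈ s i} => (SBop n * D) r (a : Fin m))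
        (fun a : {a // a ∈ s (i + 1)} => -((STop n * D) r (a : Fin m))) with hA
    set v : ({a // a ∈ s i} ⊕ {a // a ∈ s (i + 1)}) → ℝ :=
      Sum.elim (fun a => Γ (i, (a : Fin m))) (fun a => Γ (i + 1, (a : Fin m))) with hv'
    have hv : v ≠ 0 := by
      rcases not_and_or.mp hempty with h | h
      · obtain ⟨a, ha⟩ := Finset.nonempty_iff_ne_empty.mpr h
        intro h0
        exact hsupp' i a ha (congrFun h0 (Sum.inl ⟨a, ha⟩))
      · obtain ⟨a, ha⟩ := Finset.nonempty_iff_ne_empty.mpr h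
        intro h0
        exact hsupp' (i+1) a ha (congrFun h0 (Sum.inr ⟨a, ha⟩))
    have hAv : A.mulVec v = 0 := by
      funext r
      have hr1 : (r:ℕ) + 1 < n := by have := r.isLt; omega
      have hrn : (r:ℕ) < n := by omega
      simp only [Matrix.mulVec, dotProduct, Fintype.sum_sum_type, hA, hv', Matrix.of_apply,
        Sum.elim_inl, Sum.elim_inr, Pi.zero_apply, neg_mul]
      have e1 : (∑ a : {a // a ∈ s i}, (SBop n * D) r (a : Fin m) * Γ (i, (a : Fin m)))
          = ∑ a : Fin m, D ⟨(r:ℕ)+1, hr1⟩ a * Γ (i, a) :=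
        calc (∑ a : {a // a ∈ s i}, (SBop n * D) r (a : Fin m) * Γ (i, (a : Fin m)))
            = ∑ a ∈ s i, (SBop n * D) r a * Γ (i, a) :=
              Finset.sum_coe_sort (s i) (fun a => (SBop n * D) r a * Γ (i, a))
          _ = ∑ a : Fin m, (SBop n * D) r a * Γ (i, a) :=
              Finset.sum_subset (Finset.subset_univ _)
                (fun x _ hx => by rw [hsupp i x hx, mul_zero])
          _ = ∑ a : Fin m, D ⟨(r:ℕ)+1, hr1⟩ a * Γ (i, a) :=
              Finset.sum_congr rfl fun a _ => by rw [SBD_apply]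
      have e2 : (∑ a : {a // a ∈ s (i+1)}, -((STop n * D) r (a : Fin m) * Γ (i+1, (a : Fin m))))
          = -∑ a : Fin m, D ⟨(r:ℕ), hrn⟩ a * Γ (i+1, a) := by
        rw [Finset.sum_neg_distrib]
        refine congrArg Neg.neg ?_
        calc (∑ a : {a // a ∈ s (i+1)}, (STop n * D) r (a : Fin m) * Γ (i+1, (a : Fin m)))
            = ∑ a ∈ s (i+1), (STop n * D) r a * Γ (i+1, a) :=
              Finset.sum_coe_sort (s (i+1)) (fun a => (STop n * D) r a * Γ (i+1, a))
          _ = ∑ a : Fin m, (STop n * D) r a * Γ (i+1, a) :=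
              Finset.sum_subset (Finset.subset_univ _)
                (fun x _ hx => by rw [hsupp (i+1) x hx, mul_zero])
          _ = ∑ a : Fin m, D ⟨(r:ℕ), hrn⟩ a * Γ (i+1, a) :=
              Finset.sum_congr rfl fun a _ => by rw [STD_apply]
      rw [e1, e2, shift_eq n m N D Γ hM i (r:ℕ) hr1, add_neg_cancel]
    have hlt := rank_lt_of_ker A v hv hAv
    simp only [Fintype.card_sum, Fintype.card_coe] at hlt
    exact_mod_cast hlt

end
end
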